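/- (Theorem 4.1, quadratic majorization of the logistic L₂E loss.) Let η ≥ η* := sup_{p∈[0,1]} ψ₁(p). Then for all θ, θ̃ ∈ ℝ^{p+1}: L(θ) ≤ L(θ̃) + (2/n)·(F(X̃θ̃) − y)ᵀ G_{θ̃} X̃ (θ − θ̃) + (η/(2n))·‖X̃(θ − θ̃)‖₂², where G_{θ̃} is the n×n diagonal matrix with entries (G_{θ̃})_{ii} = F(x̃ᵢᵀθ̃)(1 − F(x̃ᵢᵀθ̃)), and equality holds at θ = θ̃. -/

import Mathlib

open Finset

/-!
Write `f_y(u) = (y - F u)²` for one summand of the loss. With `p = F u` and `F' = F (1 - F)`,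
`f_y'' = 2 p(1-p) (p(1-p) + (p - y)(1 - 2p))`, which is `ψ₁(p)` for `y = 1` and `ψ₁(1 - p)` for
`y = 0`. Hence `η ≥ η*` bounds `f_y''` on all of `ℝ`, so `u ↦ η u² / 2 - f_y u` is convex and lies
above its tangent lines; this is the quadratic majorization of each summand, and the theorem is its
average over the `n` observations at `u = x̃ᵢᵀθ`, `ũ = x̃ᵢᵀθ̃`.
-/

/-- The logistic function `F(u) = 1/(1 + exp(-u))`. -/
noncomputable def logisticF (u : ℝ) : ℝ := 1 / (1 + Real.exp (-u))

/-- `ψ_u(p) = [2p(1−p) − (2p−1)((2p−1) − u)]·p(1−p)`. -/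
def psi (u p : ℝ) : ℝ := (2*p*(1-p) - (2*p-1)*((2*p-1) - u)) * (p*(1-p))

/-- The logistic L₂E loss `L(θ) = (1/n)∑ᵢ (yᵢ − F(x̃ᵢᵀθ))²`. -/
noncomputable def L2Eloss {n p : ℕ} (X : Matrix (Fin n) (Fin (p+1)) ℝ)
    (y : Fin n → ℝ) (θ : Fin (p+1) → ℝ) : ℝ :=
  (1/(n:ℝ)) * ∑ i, (y i - logisticF (∑ j, X i j * θ j))^2

theorem ConvexOn.add_mul_sub_le_of_hasDerivAt {S : Set ℝ} {f : ℝ → ℝ} {f' x y : ℝ}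
    (hf : ConvexOn ℝ S f) (hxS : x ∈ S) (hyS : y ∈ S) (hx : HasDerivAt f f' x) :
    f x + f' * (y - x) ≤ f y := by
  rcases lt_trichotomy x y with hxy | rfl | hxy
  · have := hf.le_slope_of_hasDerivAt hxS hyS hxy hx
    rw [slope_def_field, le_div_iff₀ (sub_pos.2 hxy)] at this
    linarith
  · simp
  · have := hf.slope_le_of_hasDerivAt hyS hxS hxy hx
    rw [slope_def_field, div_le_iff₀ (sub_pos.2 hxy)] at this
    linarith

theorem le_add_mul_add_sq_of_hasDerivAt_of_le {f f' f'' : ℝ → ℝ} {η : ℝ}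
    (hf : ∀ u, HasDerivAt f (f' u) u) (hf' : ∀ u, HasDerivAt f' (f'' u) u)
    (hf'' : ∀ u, f'' u ≤ η) (a b : ℝ) :
    f a ≤ f b + f' b * (a - b) + η / 2 * (a - b) ^ 2 := by
  have hg : ∀ u, HasDerivAt (fun u => η / 2 * u ^ 2 - f u) (η * u - f' u) u := fun u => by
    refine (((hasDerivAt_pow 2 u).const_mul (η / 2)).sub (hf u)).congr_deriv ?_
    ring
  have hg' : ∀ u, HasDerivAt (fun u => η * u - f' u) (η - f'' u) u := fun u => by
    refine (((hasDerivAt_id u).const_mul η).sub (hf' u)).congr_deriv ?_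
    simp
  have hconvex : ConvexOn ℝ Set.univ (fun u => η / 2 * u ^ 2 - f u) := by
    refine convexOn_of_hasDerivWithinAt2_nonneg convex_univ
      (fun u _ => (hg u).continuousAt.continuousWithinAt)
      (fun u _ => (hg u).hasDerivWithinAt) (fun u _ => (hg' u).hasDerivWithinAt) ?_
    exact fun u _ => sub_nonneg.2 (hf'' u)
  have htangent := hconvex.add_mul_sub_le_of_hasDerivAt trivial trivial (hg b) (y := a)
  linear_combination htangent

theorem logisticF_mem_Icc (u : ℝ) : logisticF u ∈ Set.Icc (0 : ℝ) 1 := by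
  have he : 0 < Real.exp (-u) := Real.exp_pos _
  refine ⟨by unfold logisticF; positivity, ?_⟩
  rw [logisticF, div_le_one (by linarith)]
  linarith

theorem hasDerivAt_logisticF (u : ℝ) :
    HasDerivAt logisticF (logisticF u * (1 - logisticF u)) u := by
  have hexp : HasDerivAt (fun u => 1 + Real.exp (-u)) (-Real.exp (-u)) u := by
    simpa using ((Real.hasDerivAt_exp (-u)).comp u (hasDerivAt_neg u)).const_add 1
  have hne : 1 + Real.exp (-u) ≠ 0 := by positivity
  refine ((hasDerivAt_const u (1 : ℝ)).div hexp hne).congr_deriv ?_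
  simp only [logisticF]
  field_simp
  ring

theorem hasDerivAt_sq_sub_logisticF (y u : ℝ) :
    HasDerivAt (fun u => (y - logisticF u) ^ 2)
      (2 * (logisticF u - y) * (logisticF u * (1 - logisticF u))) u := by
  refine (((hasDerivAt_logisticF u).const_sub y).pow 2).congr_deriv ?_
  ring

theorem hasDerivAt_deriv_sq_sub_logisticF (y u : ℝ) :
    HasDerivAt (fun u => 2 * (logisticF u - y) * (logisticF u * (1 - logisticF u)))
      (2 * (logisticF u * (1 - logisticF u)) *
        (logisticF u * (1 - logisticF u) + (logisticF u - y) * (1 - 2 * logisticF u))) u := by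
  have hF := hasDerivAt_logisticF u
  refine (((hF.sub_const y).const_mul 2).mul (hF.mul (hF.const_sub 1))).congr_deriv ?_
  simp only [Pi.mul_apply]
  ring

theorem psi_one_le_sSup {p : ℝ} (hp : p ∈ Set.Icc (0 : ℝ) 1) :
    psi 1 p ≤ sSup (psi 1 '' Set.Icc (0 : ℝ) 1) := by
  have hcont : Continuous (psi 1) := by unfold psi; fun_prop
  exact le_csSup (isCompact_Icc.image hcont).bddAbove ⟨p, hp, rfl⟩

theorem sq_sub_logisticF_le {y η : ℝ} (hy : y = 0 ∨ y = 1)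
    (hη : sSup (psi 1 '' Set.Icc (0 : ℝ) 1) ≤ η) (a b : ℝ) :
    (y - logisticF a) ^ 2 ≤ (y - logisticF b) ^ 2
      + 2 * (logisticF b - y) * (logisticF b * (1 - logisticF b)) * (a - b)
      + η / 2 * (a - b) ^ 2 := by
  refine le_add_mul_add_sq_of_hasDerivAt_of_le (hasDerivAt_sq_sub_logisticF y)
    (hasDerivAt_deriv_sq_sub_logisticF y) (fun u => le_trans ?_ hη) a b
  obtain ⟨h0, h1⟩ := logisticF_mem_Icc u
  rcases hy with rfl | rfl
  · refine le_of_eq_of_le ?_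
      (psi_one_le_sSup (p := 1 - logisticF u) ⟨by linarith, by linarith⟩)
    unfold psi; ring
  · refine le_of_eq_of_le ?_ (psi_one_le_sSup (logisticF_mem_Icc u))
    unfold psi; ring

theorem stmt_6_general (n p : ℕ)
    (X : Matrix (Fin n) (Fin (p+1)) ℝ) (y : Fin n → ℝ)
    (hy : ∀ i, y i = 0 ∨ y i = 1)
    (η : ℝ) (hη : sSup (psi 1 '' Set.Icc (0:ℝ) 1) ≤ η)
    (θ θt : Fin (p+1) → ℝ) :
    L2Eloss X y θ ≤
      L2Eloss X y θt
        + (2/(n:ℝ)) * ∑ i,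
            (logisticF (∑ j, X i j * θt j) - y i)
              * (logisticF (∑ j, X i j * θt j) * (1 - logisticF (∑ j, X i j * θt j)))
              * (∑ j, X i j * (θ j - θt j))
        + (η/(2*(n:ℝ))) * ∑ i, (∑ j, X i j * (θ j - θt j))^2 ∧
    L2Eloss X y θt =
      L2Eloss X y θt
        + (2/(n:ℝ)) * ∑ i,
            (logisticF (∑ j, X i j * θt j) - y i)
              * (logisticF (∑ j, X i j * θt j) * (1 - logisticF (∑ j, X i j * θt j)))
              * (∑ j, X i j * (θt j - θt j))
        + (η/(2*(n:ℝ))) * ∑ i, (∑ j, X i j * (θt j - θt j))^2 := by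
  refine ⟨?_, by simp⟩
  have hdiff : ∀ i, ∑ j, X i j * (θ j - θt j) = ∑ j, X i j * θ j - ∑ j, X i j * θt j :=
    fun i => by simp only [mul_sub, sum_sub_distrib]
  unfold L2Eloss
  simp only [hdiff, mul_sum, ← sum_add_distrib]
  refine sum_le_sum fun i _ => ?_
  have hi := sq_sub_logisticF_le (hy i) hη (∑ j, X i j * θ j) (∑ j, X i j * θt j)
  linear_combination (1 / (n : ℝ)) * hi

/-- Theorem 4.1, quadratic majorization of the logistic L₂E loss: if
`η ≥ η* = sup_{p∈[0,1]} ψ₁(p)`, then for all `θ, θ̃`,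
`L(θ) ≤ L(θ̃) + (2/n)(F(X̃θ̃) − y)ᵀ G_{θ̃} X̃ (θ − θ̃) + (η/(2n))‖X̃(θ − θ̃)‖₂²`,
with equality at `θ = θ̃`. -/
theorem stmt_6 (n p : ℕ) (hn : 0 < n)
    (X : Matrix (Fin n) (Fin (p+1)) ℝ) (y : Fin n → ℝ)
    (hy : ∀ i, y i = 0 ∨ y i = 1)
    (η : ℝ) (hη : sSup (psi 1 '' Set.Icc (0:ℝ) 1) ≤ η)
    (θ θt : Fin (p+1) → ℝ) :
    L2Eloss X y θ ≤
      L2Eloss X y θt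
        + (2/(n:ℝ)) * ∑ i,
            (logisticF (∑ j, X i j * θt j) - y i)
              * (logisticF (∑ j, X i j * θt j) * (1 - logisticF (∑ j, X i j * θt j)))
              * (∑ j, X i j * (θ j - θt j))
        + (η/(2*(n:ℝ))) * ∑ i, (∑ j, X i j * (θ j - θt j))^2 ∧
    L2Eloss X y θt =
      L2Eloss X y θt
        + (2/(n:ℝ)) * ∑ i,
            (logisticF (∑ j, X i j * θt j) - y i)
              * (logisticF (∑ j, X i j * θt j) * (1 - logisticF (∑ j, X i j * θt j)))
              * (∑ j, X i j * (θt j - θt j))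
        + (η/(2*(n:ℝ))) * ∑ i, (∑ j, X i j * (θt j - θt j))^2 :=
  stmt_6_general n p X y hy η hη θ θt
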